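/- arXiv:2401.03607 — 3 statements merged into one kernel-verified Lean document; each statement's English description precedes it below -/
import Mathlib

section
/- Let c > 0, σ > 0, and δ ∈ [0, 1). The equation 1/c = 1/V² − δ/(V + σ²)² has a unique solution V > 0, and this solution satisfies V ≤ √c, with equality if and only if δ = 0. -/
lemma mono_key {δ s a b : ℝ} (hδ0 : 0 ≤ δ) (hδ1 : δ < 1) (hs : 0 < s)
    (ha : 0 < a) (hab : a < b) :
    1/b^2 - δ/(b+s)^2 < 1/a^2 - δ/(a+s)^2 := by
  have hb : 0 < b := ha.trans hab
  have has : 0 < a + s := by linarith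
  have hbs : 0 < b + s := by linarith
  have h3 : 1/(a+s)^2 - 1/(b+s)^2 < 1/a^2 - 1/b^2 := by
    rw [div_sub_div _ _ (by positivity : ((a+s)^2:ℝ) ≠ 0) (by positivity : ((b+s)^2:ℝ) ≠ 0),
        div_sub_div _ _ (by positivity : (a^2:ℝ) ≠ 0) (by positivity : (b^2:ℝ) ≠ 0),
        div_lt_div_iff₀ (by positivity) (by positivity)]
    have hP : 2*a^2*b^2 < (a+b)*(a+b+s)*(a*b+(a+s)*(b+s)) := by
      have hA : 4*(a*b) ≤ (a+b)*(a+b+s) := by nlinarith [sq_nonneg (a-b), mul_pos hs (add_pos ha hb)]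
      have hB : 2*(a*b) < a*b+(a+s)*(b+s) := by nlinarith [mul_pos hs (add_pos ha hb), mul_pos hs hs]
      have hBpos : (0:ℝ) < a*b+(a+s)*(b+s) := by positivity
      have step1 : 4*(a*b)*(a*b+(a+s)*(b+s)) ≤ (a+b)*(a+b+s)*(a*b+(a+s)*(b+s)) :=
        mul_le_mul_of_nonneg_right hA hBpos.le
      have step2 : 4*(a*b)*(2*(a*b)) < 4*(a*b)*(a*b+(a+s)*(b+s)) :=
        mul_lt_mul_of_pos_left hB (by positivity)
      nlinarith [step1, step2, mul_pos (mul_pos ha hb) (mul_pos ha hb)]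
    nlinarith [mul_lt_mul_of_pos_left hP hs]
  have hD : 0 < 1/(a+s)^2 - 1/(b+s)^2 := by
    have : (a+s)^2 < (b+s)^2 := by nlinarith
    have := one_div_lt_one_div_of_lt (by positivity) this
    linarith
  have h4 : δ * (1/(a+s)^2 - 1/(b+s)^2) ≤ 1/(a+s)^2 - 1/(b+s)^2 := by nlinarith
  have e1 : δ/(a+s)^2 = δ * (1/(a+s)^2) := by ring
  have e2 : δ/(b+s)^2 = δ * (1/(b+s)^2) := by ring
  rw [e1, e2]; linarith [h4]

open Real

theorem stmt7 (c σ δ : ℝ) (hc : 0 < c) (hσ : 0 < σ) (hδ : δ ∈ Set.Ico (0 : ℝ) 1) :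
    (∃! V : ℝ, 0 < V ∧ 1 / c = 1 / V ^ 2 - δ / (V + σ ^ 2) ^ 2) ∧
    (∀ V : ℝ, 0 < V → 1 / c = 1 / V ^ 2 - δ / (V + σ ^ 2) ^ 2 →
      V ≤ Real.sqrt c ∧ (V = Real.sqrt c ↔ δ = 0)) := by
  obtain ⟨hδ0, hδ1⟩ := hδ
  have hs : (0:ℝ) < σ^2 := by positivity
  have hsc : 0 < Real.sqrt c := Real.sqrt_pos.mpr hc
  have hscsq : Real.sqrt c ^ 2 = c := Real.sq_sqrt hc.le
  constructor
  · -- existence and uniqueness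
    set f : ℝ → ℝ := fun V => 1 / V ^ 2 - δ / (V + σ^2) ^ 2 with hf
    -- lower endpoint
    set A : ℝ := Real.sqrt (1 / (1/c + 1/(σ^2)^2)) with hA_def
    have hsum : (0:ℝ) < 1/c + 1/(σ^2)^2 := by positivity
    have hApos : 0 < A := Real.sqrt_pos.mpr (by positivity)
    have hAsq : A ^ 2 = 1 / (1/c + 1/(σ^2)^2) := Real.sq_sqrt (by positivity)
    have hAle : A ≤ Real.sqrt c := by
      apply Real.sqrt_le_sqrt
      rw [div_le_iff₀ hsum]
      have he : c * (1/c + 1/(σ^2)^2) = 1 + c/(σ^2)^2 := by field_simp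
      have : (0:ℝ) ≤ c/(σ^2)^2 := by positivity
      rw [he]; linarith
    have hfA : 1 / c ≤ f A := by
      have h1 : 1 / A ^ 2 = 1/c + 1/(σ^2)^2 := by
        rw [hAsq, one_div_one_div]
      have h2 : δ / (A + σ^2)^2 ≤ 1 / (σ^2)^2 := by
        apply div_le_div₀ zero_le_one hδ1.le (by positivity)
        nlinarith [hApos, hs]
      simp only [hf, h1]
      linarith
    have hfB : f (Real.sqrt c) ≤ 1 / c := by
      have : 0 ≤ δ / (Real.sqrt c + σ^2)^2 := by positivity
      simp only [hf, hscsq]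
      linarith
    have hcont : ContinuousOn f (Set.Icc A (Real.sqrt c)) := by
      apply ContinuousOn.sub
      · apply ContinuousOn.div continuousOn_const (by fun_prop)
        intro x hx
        have : 0 < x := lt_of_lt_of_le hApos hx.1
        positivity
      · apply ContinuousOn.div continuousOn_const (by fun_prop)
        intro x hx
        have : 0 < x := lt_of_lt_of_le hApos hx.1
        positivity
    have hIVT := intermediate_value_Icc' hAle hcont
    have hmem : (1:ℝ)/c ∈ Set.Icc (f (Real.sqrt c)) (f A) := ⟨hfB, hfA⟩
    obtain ⟨V, hVmem, hVeq⟩ := hIVT hmem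
    have hVpos : 0 < V := lt_of_lt_of_le hApos hVmem.1
    refine ⟨V, ⟨hVpos, hVeq.symm⟩, ?_⟩
    rintro W ⟨hWpos, hWeq⟩
    rcases lt_trichotomy W V with h | h | h
    · exfalso
      have := mono_key hδ0 hδ1 hs hWpos h
      simp only [hf] at hVeq
      rw [← hWeq, ← hVeq] at this
      exact lt_irrefl _ this
    · exact h
    · exfalso
      have := mono_key hδ0 hδ1 hs hVpos h
      simp only [hf] at hVeq
      rw [← hWeq, ← hVeq] at this
      exact lt_irrefl _ this
  · intro V hV hEq
    have hVs : (0:ℝ) < (V + σ^2)^2 := by positivity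
    have hdnn : 0 ≤ δ / (V + σ^2)^2 := by positivity
    have h1 : 1 / c ≤ 1 / V ^ 2 := by linarith
    have hV2 : V ^ 2 ≤ c := by
      rw [div_le_div_iff₀ hc (by positivity)] at h1
      linarith
    have hVle : V ≤ Real.sqrt c := by
      have := Real.sqrt_le_sqrt hV2
      rwa [Real.sqrt_sq hV.le] at this
    refine ⟨hVle, ?_, ?_⟩
    · intro hVc
      have hVsq : V ^ 2 = c := by rw [hVc, hscsq]
      have : δ / (V + σ^2)^2 = 0 := by
        rw [← hVsq] at hEq
        linarith
      have := (div_eq_zero_iff.mp this)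
      rcases this with h | h
      · exact h
      · exact absurd h (by positivity)
    · intro h0
      subst h0
      simp only [zero_div, sub_zero] at hEq
      have : c = V ^ 2 := by
        field_simp at hEq
        linarith
      rw [this, Real.sqrt_sq hV.le]
end

section
/- Let c > 0, σ > 0, δ ∈ (0, 1), and let V(δ) > 0 solve 1/c = 1/V² − δ/(V+σ²)². Then the steady-state payoff Ψ(δ) = V(δ) + c·(1/V(δ) − 1/(V(δ)+σ²)) is strictly decreasing in δ. -/
/-!
Write `a = 1 / V` and `b = 1 / (V + σ²)`. The right-hand side `a² - δ b²` of the steady-state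
equation is antitone in `V` for `δ ≤ 1` (the gap `a - b` shrinks along with `a` and `b`) and
strictly antitone in `δ`, so a larger `δ` forces a smaller `V(δ)`. The cost `Ψ` has the difference
quotient `(Ψ(V) - Ψ(W)) / (V - W) = 1 - c (a_V a_W - b_V b_W)`, and for `W ≤ V` the mixed term is
at most `a_W² - b_W² < a_W² - δ b_W² = 1 / c`, so `Ψ` increases from `V(δ₂)` to `V(δ₁)`.
-/

open Set

section SteadyState

variable {s V W : ℝ}

theorem one_div_add_sub_one_div_add_le (hs : 0 ≤ s) (hW : 0 < W) (hWV : W ≤ V) :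
    1 / (W + s) - 1 / (V + s) ≤ 1 / W - 1 / V := by
  have hV : 0 < V := hW.trans_le hWV
  rw [div_sub_div _ _ (by positivity) (by positivity),
    div_sub_div _ _ hW.ne' hV.ne']
  apply div_le_div₀ (by linarith) (by linarith) (by positivity)
  nlinarith [mul_nonneg hs (add_nonneg hW.le hV.le)]

theorem antitoneOn_one_div_sq_sub_div_add_sq {δ : ℝ} (hs : 0 ≤ s) (hδ : δ ≤ 1) :
    AntitoneOn (fun V : ℝ => 1 / V ^ 2 - δ / (V + s) ^ 2) (Ioi 0) := by
  intro W (hW : 0 < W) V (hV : 0 < V) hWV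
  have hgap := one_div_add_sub_one_div_add_le hs hW hWV
  have hbV : 0 < 1 / (V + s) := by positivity
  have hb : 1 / (V + s) ≤ 1 / (W + s) := one_div_le_one_div_of_le (by positivity) (by linarith)
  have haW : 1 / (W + s) ≤ 1 / W := one_div_le_one_div_of_le hW (by linarith)
  have haV : 1 / (V + s) ≤ 1 / V := one_div_le_one_div_of_le hV (by linarith)
  simp only [div_eq_mul_one_div δ, ← one_div_pow]
  nlinarith [mul_le_mul hgap (add_le_add haW haV) (by positivity) (by linarith),
    mul_nonneg (sub_nonneg.2 hδ) (mul_nonneg (sub_nonneg.2 hb) (add_nonneg hbV.le hbV.le))]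

theorem lt_of_one_div_sq_sub_div_add_sq_eq {δ₁ δ₂ : ℝ} (hs : 0 ≤ s) (hδ₁ : δ₁ ≤ 1)
    (hlt : δ₁ < δ₂) (hV : 0 < V) (hW : 0 < W)
    (heq : 1 / V ^ 2 - δ₁ / (V + s) ^ 2 = 1 / W ^ 2 - δ₂ / (W + s) ^ 2) : W < V := by
  refine (antitoneOn_one_div_sq_sub_div_add_sq hs hδ₁).reflect_lt
    (mem_Ioi.2 hV) (mem_Ioi.2 hW) ?_
  simp only [heq]
  exact sub_lt_sub_left (div_lt_div_of_pos_right hlt (by positivity)) _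

theorem one_div_mul_one_div_sub_le (hs : 0 ≤ s) (hW : 0 < W) (hWV : W ≤ V) :
    1 / V * (1 / W) - 1 / (V + s) * (1 / (W + s)) ≤ 1 / W ^ 2 - 1 / (W + s) ^ 2 := by
  have hgap := one_div_add_sub_one_div_add_le hs hW hWV
  have hb : 1 / (V + s) ≤ 1 / (W + s) := one_div_le_one_div_of_le (by positivity) (by linarith)
  have haW : 1 / (W + s) ≤ 1 / W := one_div_le_one_div_of_le hW (by linarith)
  simp only [← one_div_pow]
  nlinarith [mul_le_mul haW hgap (by linarith) (by positivity)]

theorem add_mul_one_div_sub_lt {c : ℝ} (hc : 0 < c) (hs : 0 ≤ s) (hW : 0 < W) (hWV : W < V)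
    (hW1 : c * (1 / W ^ 2 - 1 / (W + s) ^ 2) < 1) :
    W + c * (1 / W - 1 / (W + s)) < V + c * (1 / V - 1 / (V + s)) := by
  have hV : 0 < V := hW.trans hWV
  have hdiff : V + c * (1 / V - 1 / (V + s)) - (W + c * (1 / W - 1 / (W + s))) =
      (V - W) * (1 - c * (1 / V * (1 / W) - 1 / (V + s) * (1 / (W + s)))) := by
    field_simp
    ring
  have hmixed := mul_le_mul_of_nonneg_left (one_div_mul_one_div_sub_le hs hW hWV.le) hc.le
  rw [← sub_pos, hdiff]
  exact mul_pos (sub_pos.2 hWV) (by linarith)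

end SteadyState

theorem stmt10_general (c σ : ℝ) (hc : 0 < c)
    (δ₁ δ₂ : ℝ) (hδ₁ : δ₁ ∈ Set.Ioo (0 : ℝ) 1) (hδ₂ : δ₂ ∈ Set.Ioo (0 : ℝ) 1)
    (hlt : δ₁ < δ₂) (V₁ V₂ : ℝ) (hV₁ : 0 < V₁) (hV₂ : 0 < V₂)
    (heq₁ : 1 / c = 1 / V₁ ^ 2 - δ₁ / (V₁ + σ ^ 2) ^ 2)
    (heq₂ : 1 / c = 1 / V₂ ^ 2 - δ₂ / (V₂ + σ ^ 2) ^ 2) :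
    V₂ + c * (1 / V₂ - 1 / (V₂ + σ ^ 2)) < V₁ + c * (1 / V₁ - 1 / (V₁ + σ ^ 2)) := by
  have hs : 0 ≤ σ ^ 2 := sq_nonneg σ
  have hV : V₂ < V₁ :=
    lt_of_one_div_sq_sub_div_add_sq_eq hs hδ₁.2.le hlt hV₁ hV₂ (heq₁.symm.trans heq₂)
  have hslope : c * (1 / V₂ ^ 2 - 1 / (V₂ + σ ^ 2) ^ 2) < 1 := by
    refine (lt_div_iff₀' hc).1 ?_
    rw [heq₂]
    exact sub_lt_sub_left (div_lt_div_of_pos_right hδ₂.2 (by positivity)) _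
  exact add_mul_one_div_sub_lt hc hs hV₂ hV hslope

theorem stmt10 (c σ : ℝ) (hc : 0 < c) (hσ : 0 < σ)
    (δ₁ δ₂ : ℝ) (hδ₁ : δ₁ ∈ Set.Ioo (0 : ℝ) 1) (hδ₂ : δ₂ ∈ Set.Ioo (0 : ℝ) 1)
    (hlt : δ₁ < δ₂) (V₁ V₂ : ℝ) (hV₁ : 0 < V₁) (hV₂ : 0 < V₂)
    (heq₁ : 1 / c = 1 / V₁ ^ 2 - δ₁ / (V₁ + σ ^ 2) ^ 2)
    (heq₂ : 1 / c = 1 / V₂ ^ 2 - δ₂ / (V₂ + σ ^ 2) ^ 2) :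
    V₂ + c * (1 / V₂ - 1 / (V₂ + σ ^ 2)) < V₁ + c * (1 / V₁ - 1 / (V₁ + σ ^ 2)) :=
  stmt10_general c σ hc δ₁ δ₂ hδ₁ hδ₂ hlt V₁ V₂ hV₁ hV₂ heq₁ heq₂
end

section
/- Let c > 0, σ > 0, δ ∈ (0, 1), and let V(δ) solve 1/c = 1/V² − δ/(V+σ²)². The steady-state forward-looking precision p†(δ) = 1/V(δ) − 1/(V(δ)+σ²) is strictly increasing in δ, and p†(δ) > p* = 1/√c − 1/(√c+σ²) for all δ ∈ (0, 1), where p* is the steady-state myopic precision. -/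
open Real

/-- f_δ(V) = 1/V² - δ/(V+σ²)² is strictly decreasing in V for 0 ≤ δ < 1. -/
lemma aux_fmono (σ δ a b : ℝ) (hσ : 0 < σ) (ha : 0 < a) (hab : a < b)
    (hδ0 : 0 ≤ δ) (hδ1 : δ < 1) :
    1 / b ^ 2 - δ / (b + σ ^ 2) ^ 2 < 1 / a ^ 2 - δ / (a + σ ^ 2) ^ 2 := by
  have hb : 0 < b := ha.trans hab
  have ha2 : 0 < a + σ ^ 2 := by positivity
  have hb2 : 0 < b + σ ^ 2 := by positivity
  have hba : 0 < b - a := sub_pos.2 hab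
  have h1 : δ / (a + σ ^ 2) ^ 2 - δ / (b + σ ^ 2) ^ 2
      = δ * ((b - a) * (a + b + 2 * σ ^ 2)) / ((a + σ ^ 2) ^ 2 * (b + σ ^ 2) ^ 2) := by
    field_simp; ring
  have h2 : 1 / a ^ 2 - 1 / b ^ 2 = (b - a) * (a + b) / (a ^ 2 * b ^ 2) := by
    field_simp; ring
  have hP : (a + b + 2 * σ ^ 2) * (a ^ 2 * b ^ 2) < (a + b) * ((a + σ ^ 2) ^ 2 * (b + σ ^ 2) ^ 2) := by
    have ht : (0:ℝ) < σ ^ 2 := by positivity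
    have hp : 0 < a * b := mul_pos ha hb
    have hs : 0 < a + b := by linarith
    have h4 : 0 < (a + b) ^ 2 - a * b := by nlinarith
    nlinarith [mul_pos ht (mul_pos hp h4),
      mul_pos (mul_pos hp (mul_pos ht ht)) hs,
      mul_pos (mul_pos ht ht) (mul_pos hs (mul_pos hs hs)),
      mul_pos (mul_pos ht (mul_pos ht ht)) (mul_pos hs hs),
      mul_pos (mul_pos (mul_pos ht ht) (mul_pos ht ht)) hs]
  have key : δ * ((b - a) * (a + b + 2 * σ ^ 2)) * (a ^ 2 * b ^ 2)
      < (b - a) * (a + b) * ((a + σ ^ 2) ^ 2 * (b + σ ^ 2) ^ 2) := by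
    calc δ * ((b - a) * (a + b + 2 * σ ^ 2)) * (a ^ 2 * b ^ 2)
        ≤ 1 * ((b - a) * (a + b + 2 * σ ^ 2)) * (a ^ 2 * b ^ 2) := by
          apply mul_le_mul_of_nonneg_right _ (by positivity)
          exact mul_le_mul_of_nonneg_right hδ1.le (by positivity)
      _ = (b - a) * ((a + b + 2 * σ ^ 2) * (a ^ 2 * b ^ 2)) := by ring
      _ < (b - a) * ((a + b) * ((a + σ ^ 2) ^ 2 * (b + σ ^ 2) ^ 2)) :=
          mul_lt_mul_of_pos_left hP hba
      _ = (b - a) * (a + b) * ((a + σ ^ 2) ^ 2 * (b + σ ^ 2) ^ 2) := by ring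
  have keydiv : δ * ((b - a) * (a + b + 2 * σ ^ 2)) / ((a + σ ^ 2) ^ 2 * (b + σ ^ 2) ^ 2)
      < (b - a) * (a + b) / (a ^ 2 * b ^ 2) := by
    rw [div_lt_div_iff₀ (by positivity) (by positivity)]
    linarith [key]
  linarith [h1, h2, keydiv]

lemma aux_pmono (σ a b : ℝ) (hσ : 0 < σ) (ha : 0 < a) (hab : a < b) :
    1 / b - 1 / (b + σ ^ 2) < 1 / a - 1 / (a + σ ^ 2) := by
  have hb : 0 < b := ha.trans hab
  have ha2 : 0 < a + σ ^ 2 := by positivity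
  have hb2 : 0 < b + σ ^ 2 := by positivity
  have hσ2 : (0:ℝ) < σ ^ 2 := by positivity
  have h3 : a * (a + σ ^ 2) < b * (b + σ ^ 2) := by nlinarith
  rw [div_sub_div _ _ (ne_of_gt hb) (ne_of_gt hb2), div_sub_div _ _ (ne_of_gt ha) (ne_of_gt ha2),
    div_lt_div_iff₀ (by positivity) (by positivity)]
  nlinarith [mul_lt_mul_of_pos_left h3 hσ2]

theorem stmt19 (c σ : ℝ) (hc : 0 < c) (hσ : 0 < σ) :
    (∀ δ₁ δ₂ : ℝ, δ₁ ∈ Set.Ioo (0 : ℝ) 1 → δ₂ ∈ Set.Ioo (0 : ℝ) 1 → δ₁ < δ₂ →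
      ∀ V₁ V₂ : ℝ, 0 < V₁ → 0 < V₂ →
        1 / c = 1 / V₁ ^ 2 - δ₁ / (V₁ + σ ^ 2) ^ 2 →
        1 / c = 1 / V₂ ^ 2 - δ₂ / (V₂ + σ ^ 2) ^ 2 →
        1 / V₁ - 1 / (V₁ + σ ^ 2) < 1 / V₂ - 1 / (V₂ + σ ^ 2)) ∧
    (∀ δ : ℝ, δ ∈ Set.Ioo (0 : ℝ) 1 → ∀ V : ℝ, 0 < V →
      1 / c = 1 / V ^ 2 - δ / (V + σ ^ 2) ^ 2 →
      1 / Real.sqrt c - 1 / (Real.sqrt c + σ ^ 2) < 1 / V - 1 / (V + σ ^ 2)) := by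
  constructor
  · rintro δ₁ δ₂ ⟨hδ₁0, hδ₁1⟩ ⟨hδ₂0, hδ₂1⟩ hδ V₁ V₂ hV₁ hV₂ h₁ h₂
    have hV12 : 0 < (V₁ + σ ^ 2) ^ 2 := by positivity
    have hdd : δ₁ / (V₁ + σ ^ 2) ^ 2 < δ₂ / (V₁ + σ ^ 2) ^ 2 := by gcongr
    have hlt : 1 / V₁ ^ 2 - δ₂ / (V₁ + σ ^ 2) ^ 2 < 1 / V₂ ^ 2 - δ₂ / (V₂ + σ ^ 2) ^ 2 := by
      linarith
    have hVlt : V₂ < V₁ := by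
      by_contra h
      push_neg at h
      rcases lt_or_eq_of_le h with h' | h'
      · have := aux_fmono σ δ₂ V₁ V₂ hσ hV₁ h' hδ₂0.le hδ₂1
        linarith
      · rw [h'] at hlt; linarith
    exact aux_pmono σ V₂ V₁ hσ hV₂ hVlt
  · rintro δ ⟨hδ0, hδ1⟩ V hV h
    have hsc : 0 < Real.sqrt c := Real.sqrt_pos.2 hc
    have h1 : 1 / c < 1 / V ^ 2 := by
      have : 0 < δ / (V + σ ^ 2) ^ 2 := by positivity
      linarith
    have hV2 : V ^ 2 < c := by
      rw [div_lt_div_iff₀ hc (by positivity)] at h1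
      linarith
    have hVlt : V < Real.sqrt c := by
      nlinarith [Real.sq_sqrt hc.le]
    exact aux_pmono σ V (Real.sqrt c) hσ hV hVlt
end
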